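/- Let $n\ge 3$, $0<q<1$, and $0<2\alpha<n$. There exists a nonnegative locally finite Borel measure $\sigma$ on $\mathbb{R}^n$ such that (a) $\int_1^\infty \sigma(B(0,R))R^{-(n-2\alpha)}\,dR/R<\infty$, (b) for every $R>0$ the least constant $\kappa(B(0,R))$ in $\|\mathbf{I}_{2\alpha}\nu\|_{L^q(\sigma|_{B(0,R)})}\le\kappa(B(0,R))\nu(\mathbb{R}^n)$ is finite, and (c) $\int_1^\infty \kappa(B(0,R))^{q/(1-q)}R^{-(n-2\alpha)}\,dR/R=\infty$. -/

import Mathlib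

open MeasureTheory ENNReal

noncomputable def riesz (n : ℕ) (α : ℝ) (ν : Measure (EuclideanSpace ℝ (Fin n)))
    (x : EuclideanSpace ℝ (Fin n)) : ℝ≥0∞ :=
  ∫⁻ y, ENNReal.ofReal (dist x y) ^ (2 * α - n) ∂ν

/-- Least constant in the localized `(L¹, L^q)` embedding for the Riesz potential. -/
noncomputable def kappaRiesz (n : ℕ) (α q : ℝ) (σ : Measure (EuclideanSpace ℝ (Fin n)))
    (B : Set (EuclideanSpace ℝ (Fin n))) : ℝ≥0∞ :=
  sInf {κ : ℝ≥0∞ | ∀ ν : Measure (EuclideanSpace ℝ (Fin n)), IsFiniteMeasure ν →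
    (∫⁻ x in B, riesz n α ν x ^ q ∂σ) ^ (1 / q) ≤ κ * ν Set.univ}

open Metric Set Module

/-!
Place on the ray `ℕ • e` small balls `B(k • e, ρ k)`, the `k`-th carrying uniform mass `2⁻ᵏ`.
Testing `κ(B)` with the Dirac mass at the centre of a ball inside `B` gives
`κ(B)^q ≥ 2⁻ᵏ ρ_k^{-(n-2α)q}`, which the radii make as large as we like (here `(k+2)^{n-2α+1}`),
so the integral (c) diverges. Yet the measure is finite, which gives (a), and on every ball
`B(0,R)` it has a bounded density; the local integrability of `|x|^{2α-n}` then bounds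
`∫_B |x-y|^{2α-n} dσ(x)` uniformly in `y`, and Hölder's inequality (`q ≤ 1`) turns this into a
bound on `κ(B(0,R))`, which gives (b).
-/

theorem ENNReal.rpow_le_rpow_of_nonpos {x y : ℝ≥0∞} {z : ℝ} (hz : z ≤ 0) (h : x ≤ y) :
    y ^ z ≤ x ^ z := by
  rw [← neg_neg z, ENNReal.rpow_neg y, ENNReal.rpow_neg x]
  exact ENNReal.inv_le_inv.2 (ENNReal.rpow_le_rpow h (neg_nonneg.2 hz))

theorem lintegral_ball_norm_rpow_lt_top {E : Type*} [NormedAddCommGroup E] [NormedSpace ℝ E]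
    [FiniteDimensional ℝ E] [Nontrivial E] [MeasurableSpace E] [BorelSpace E] (μ : Measure E)
    [μ.IsAddHaarMeasure] {t : ℝ} (ht : -(finrank ℝ E : ℝ) < t) (r : ℝ) :
    ∫⁻ x in ball (0 : E) r, ENNReal.ofReal ‖x‖ ^ t ∂μ < ∞ := by
  rcases le_or_gt r 0 with hr | hr
  · simp [ball_eq_empty.2 hr]
  have hd : 1 ≤ finrank ℝ E := Module.finrank_pos
  have hint : IntegrableOn (fun x : E => ‖x‖ ^ t) (ball 0 r) μ := by
    rw [integrableOn_fun_norm_addHaar μ (f := fun y => y ^ t)]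
    refine IntegrableOn.congr_fun ((intervalIntegral.integrableOn_Ioo_rpow_iff
      (s := (finrank ℝ E - 1 : ℕ) + t) hr).2 (by push_cast [hd]; linarith)) (fun y hy => ?_)
      measurableSet_Ioo
    rw [smul_eq_mul, Real.rpow_add hy.1, Real.rpow_natCast]
  refine lt_of_eq_of_lt (setLIntegral_congr_fun_ae measurableSet_ball ?_) hint.setLIntegral_lt_top
  filter_upwards [measure_eq_zero_iff_ae_notMem.1 (measure_singleton (μ := μ) (0 : E))]
    with x hx _
  exact ENNReal.ofReal_rpow_of_pos (norm_pos_iff.2 hx)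

theorem setLIntegral_dist_rpow_le {E : Type*} [NormedAddCommGroup E] [MeasurableSpace E]
    [BorelSpace E] (μ : Measure E) [μ.IsAddRightInvariant] {t : ℝ} (ht : t ≤ 0)
    (A : Set E) (y : E) :
    ∫⁻ x in A, ENNReal.ofReal (dist x y) ^ t ∂μ
      ≤ ∫⁻ x in ball (0 : E) 1, ENNReal.ofReal ‖x‖ ^ t ∂μ + μ A := by
  set f := fun x => ENNReal.ofReal (dist x y) ^ t
  have hnear : ∫⁻ x in ball y 1, f x ∂μ = ∫⁻ x in ball (0 : E) 1, ENNReal.ofReal ‖x‖ ^ t ∂μ := by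
    rw [← (measurePreserving_add_right μ y).setLIntegral_comp_preimage_emb
      (measurableEmbedding_addRight y), preimage_add_right_ball, sub_self]
    simp [f]
  have hsplit : ∀ x, f x ≤ (ball y 1).indicator f x + 1 := by
    intro x
    by_cases hx : x ∈ ball y 1
    · simp [hx]
    · rw [indicator_of_notMem hx, zero_add]
      exact (ENNReal.rpow_le_rpow_of_exponent_le (ENNReal.one_le_ofReal.2 (not_lt.1 hx))
        ht).trans_eq ENNReal.rpow_zero
  calc ∫⁻ x in A, f x ∂μ
      ≤ ∫⁻ x in A, ((ball y 1).indicator f x + 1) ∂μ := lintegral_mono hsplit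
    _ = ∫⁻ x in A, (ball y 1).indicator f x ∂μ + μ A := by
        rw [lintegral_add_right _ measurable_const, setLIntegral_one]
    _ ≤ ∫⁻ x, (ball y 1).indicator f x ∂μ + μ A :=
        add_le_add_left (setLIntegral_le_lintegral _ _) _
    _ = _ := by rw [lintegral_indicator measurableSet_ball, hnear]

section BumpHeight

variable {E : Type*} [NormedAddCommGroup E] [MeasurableSpace E] (ρ : ℕ → ℝ)

noncomputable def bumpHeight (μ : Measure E) (k : ℕ) : ℝ≥0∞ :=
  (2 ^ k * μ (ball 0 (ρ k)))⁻¹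

variable {ρ}

theorem bumpHeight_ne_top (μ : Measure E) [μ.IsOpenPosMeasure] (hρ : ∀ k, 0 < ρ k) (k : ℕ) :
    bumpHeight ρ μ k ≠ ∞ :=
  ENNReal.inv_ne_top.2 (mul_ne_zero (by simp) (measure_ball_pos μ 0 (hρ k)).ne')

theorem bumpHeight_mul_measure_ball [BorelSpace E] [ProperSpace E] (μ : Measure E)
    [μ.IsAddHaarMeasure] (hρ : ∀ k, 0 < ρ k) (z : E) (k : ℕ) :
    bumpHeight ρ μ k * μ (ball z (ρ k)) = 2⁻¹ ^ k := by
  rw [bumpHeight, Measure.addHaar_ball_center μ z, ENNReal.mul_inv (by simp) (by simp),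
    mul_assoc, ENNReal.inv_mul_cancel (measure_ball_pos μ 0 (hρ k)).ne' measure_ball_lt_top.ne,
    mul_one, ENNReal.inv_pow]

end BumpHeight

section Bumps

variable {E : Type*} [NormedAddCommGroup E] [NormedSpace ℝ E] (e : E) (ρ : ℕ → ℝ)
  (c : ℕ → ℝ≥0∞)

noncomputable def bumpDensity (x : E) : ℝ≥0∞ :=
  ∑' k : ℕ, (ball ((k : ℝ) • e) (ρ k)).indicator (fun _ => c k) x

variable {e ρ} in
theorem bumpDensity_le_sum (he : ‖e‖ = 1) (hρ : ∀ k, ρ k ≤ 1) {R : ℝ} {x : E}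
    (hx : x ∈ ball (0 : E) R) :
    bumpDensity e ρ c x ≤ ∑ k ∈ Finset.range (⌈R⌉₊ + 1), c k := by
  have hfar : ∀ k ∉ Finset.range (⌈R⌉₊ + 1),
      (ball ((k : ℝ) • e) (ρ k)).indicator (fun _ => c k) x = 0 := by
    intro k hk
    refine indicator_of_notMem (fun hxk => ?_) _
    have hkR : (⌈R⌉₊ : ℝ) + 1 ≤ k := by exact_mod_cast not_lt.1 (Finset.mem_range.not.1 hk)
    have : (k : ℝ) < 1 + R := calc
      (k : ℝ) = dist ((k : ℝ) • e) 0 := by simp [norm_smul, he]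
      _ ≤ dist ((k : ℝ) • e) x + dist x 0 := dist_triangle _ _ _
      _ < 1 + R := add_lt_add_of_le_of_lt ((mem_ball'.1 hxk).le.trans (hρ k)) (mem_ball.1 hx)
    linarith [Nat.le_ceil R]
  rw [bumpDensity.eq_def, tsum_eq_sum hfar]
  exact Finset.sum_le_sum fun k _ => indicator_le (fun _ _ => le_rfl) x

variable [MeasurableSpace E] [BorelSpace E]

theorem lintegral_bumpDensity (μ : Measure E) :
    ∫⁻ x, bumpDensity e ρ c x ∂μ = ∑' k : ℕ, c k * μ (ball ((k : ℝ) • e) (ρ k)) := by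
  simp only [bumpDensity]
  rw [lintegral_tsum fun _ => (measurable_const.indicator measurableSet_ball).aemeasurable]
  simp_rw [lintegral_indicator_const measurableSet_ball]

theorem smul_restrict_ball_le_withDensity_bumpDensity (μ : Measure E) (k : ℕ) :
    c k • μ.restrict (ball ((k : ℝ) • e) (ρ k)) ≤ μ.withDensity (bumpDensity e ρ c) := by
  rw [← withDensity_const, ← withDensity_indicator measurableSet_ball]
  exact withDensity_mono (Filter.Eventually.of_forall fun x =>
    ENNReal.le_tsum (f := fun j : ℕ => (ball ((j : ℝ) • e) (ρ j)).indicator (fun _ => c j) x) k)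

variable {e ρ} in
theorem restrict_ball_withDensity_bumpDensity_le (he : ‖e‖ = 1) (hρ : ∀ k, ρ k ≤ 1)
    (μ : Measure E) (R : ℝ) :
    (μ.withDensity (bumpDensity e ρ c)).restrict (ball 0 R)
      ≤ (∑ k ∈ Finset.range (⌈R⌉₊ + 1), c k) • μ.restrict (ball 0 R) := by
  rw [restrict_withDensity measurableSet_ball, ← withDensity_const]
  exact withDensity_mono ((ae_restrict_iff' measurableSet_ball).2
    (Filter.Eventually.of_forall fun _ hx => bumpDensity_le_sum c he hρ hx))

variable [ProperSpace E] (μ : Measure E) [μ.IsAddHaarMeasure]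

variable {ρ} in
theorem isFiniteMeasure_withDensity_bumpDensity_bumpHeight (hρ : ∀ k, 0 < ρ k) :
    IsFiniteMeasure (μ.withDensity (bumpDensity e ρ (bumpHeight ρ μ))) := by
  refine ⟨?_⟩
  rw [withDensity_apply _ MeasurableSet.univ, Measure.restrict_univ, lintegral_bumpDensity]
  simp_rw [bumpHeight_mul_measure_ball μ hρ, ENNReal.tsum_geometric]
  exact ENNReal.inv_lt_top.2 (tsub_pos_of_lt (ENNReal.inv_lt_one.2 one_lt_two))

end Bumps

section Riesz

variable {n : ℕ} {α q : ℝ}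

theorem measurable_riesz (ν : Measure (EuclideanSpace ℝ (Fin n))) [SFinite ν] :
    Measurable (riesz n α ν) :=
  Measurable.lintegral_prod_right'
    (f := fun p : _ × _ => ENNReal.ofReal (dist p.1 p.2) ^ (2 * α - n)) (by fun_prop)

theorem lintegral_dist_rpow_le_kappaRiesz (σ : Measure (EuclideanSpace ℝ (Fin n)))
    (B : Set (EuclideanSpace ℝ (Fin n))) (y : EuclideanSpace ℝ (Fin n)) :
    (∫⁻ x in B, ENNReal.ofReal (dist x y) ^ ((2 * α - n) * q) ∂σ) ^ (1 / q)
      ≤ kappaRiesz n α q σ B := by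
  refine le_sInf fun κ hκ => ?_
  simpa [riesz, ← ENNReal.rpow_mul] using hκ (Measure.dirac y) inferInstance

theorem kappaRiesz_le_of_forall_setLIntegral_le (σ : Measure (EuclideanSpace ℝ (Fin n)))
    [SFinite σ] (B : Set (EuclideanSpace ℝ (Fin n))) (hq0 : 0 < q) (hq1 : q ≤ 1) {C : ℝ≥0∞}
    (hC : ∀ y, ∫⁻ x in B, ENNReal.ofReal (dist x y) ^ (2 * α - n) ∂σ ≤ C) :
    kappaRiesz n α q σ B ≤ C * σ B ^ (1 / q - 1) := by
  refine sInf_le fun ν _ => ?_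
  have htonelli : ∫⁻ x in B, riesz n α ν x ∂σ ≤ C * ν univ := by
    calc ∫⁻ x in B, riesz n α ν x ∂σ
        = ∫⁻ y, ∫⁻ x in B, ENNReal.ofReal (dist x y) ^ (2 * α - n) ∂σ ∂ν :=
          lintegral_lintegral_swap (by fun_prop)
      _ ≤ ∫⁻ _, C ∂ν := lintegral_mono hC
      _ = C * ν univ := lintegral_const C
  have hholder := eLpNorm'_le_eLpNorm'_mul_rpow_measure_univ hq0 hq1
    (measurable_riesz (α := α) ν).aestronglyMeasurable (μ := σ.restrict B)
  simp only [eLpNorm'_eq_lintegral_enorm, enorm_eq_self, Measure.restrict_apply_univ,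
    ENNReal.rpow_one, div_one] at hholder
  calc (∫⁻ x in B, riesz n α ν x ^ q ∂σ) ^ (1 / q)
      ≤ (∫⁻ x in B, riesz n α ν x ∂σ) * σ B ^ (1 / q - 1) := hholder
    _ ≤ C * ν univ * σ B ^ (1 / q - 1) := by gcongr
    _ = C * σ B ^ (1 / q - 1) * ν univ := mul_right_comm _ _ _

theorem kappaRiesz_ne_top_of_restrict_le_smul_volume (hn : 0 < n) (hq0 : 0 < q) (hq1 : q ≤ 1)
    (hα0 : 0 < α) (hα : 2 * α ≤ n) (σ : Measure (EuclideanSpace ℝ (Fin n))) [IsFiniteMeasure σ]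
    {B : Set (EuclideanSpace ℝ (Fin n))} (hB : volume B ≠ ∞) {D : ℝ≥0∞} (hD : D ≠ ∞)
    (hσ : σ.restrict B ≤ D • volume.restrict B) :
    kappaRiesz n α q σ B ≠ ∞ := by
  have : Nonempty (Fin n) := ⟨⟨0, hn⟩⟩
  set K := ∫⁻ x in ball (0 : EuclideanSpace ℝ (Fin n)) 1, ENNReal.ofReal ‖x‖ ^ (2 * α - n)
  have hK : K < ∞ := lintegral_ball_norm_rpow_lt_top volume
    (by rw [finrank_euclideanSpace_fin]; linarith) 1
  have hC : ∀ y, ∫⁻ x in B, ENNReal.ofReal (dist x y) ^ (2 * α - n) ∂σ ≤ D * (K + volume B) :=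
    fun y => calc
      _ ≤ ∫⁻ x, ENNReal.ofReal (dist x y) ^ (2 * α - n) ∂(D • volume.restrict B) :=
          lintegral_mono' hσ le_rfl
      _ = D * ∫⁻ x in B, ENNReal.ofReal (dist x y) ^ (2 * α - n) := lintegral_smul_measure _ _
      _ ≤ D * (K + volume B) := by
          gcongr; exact setLIntegral_dist_rpow_le volume (by linarith) B y
  refine ne_top_of_le_ne_top ?_ (kappaRiesz_le_of_forall_setLIntegral_le σ B hq0 hq1 hC)
  exact mul_ne_top (mul_ne_top hD (add_ne_top.2 ⟨hK.ne, hB⟩))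
    (rpow_ne_top_of_nonneg (sub_nonneg.2 (one_le_one_div hq0 hq1)) (measure_ne_top σ B))

theorem le_kappaRiesz_rpow_of_smul_restrict_le (hq0 : 0 < q) (hα : 2 * α ≤ n)
    {σ : Measure (EuclideanSpace ℝ (Fin n))} {B : Set (EuclideanSpace ℝ (Fin n))}
    {z : EuclideanSpace ℝ (Fin n)} {r : ℝ} {c : ℝ≥0∞}
    (hσ : c • volume.restrict (ball z r) ≤ σ) (hB : ball z r ⊆ B) :
    c * ENNReal.ofReal r ^ ((2 * α - n) * q) * volume (ball z r)
      ≤ kappaRiesz n α q σ B ^ q := by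
  have ht : (2 * α - n) * q ≤ 0 := mul_nonpos_of_nonpos_of_nonneg (by linarith) hq0.le
  calc c * ENNReal.ofReal r ^ ((2 * α - n) * q) * volume (ball z r)
      = c * ∫⁻ _ in ball z r, ENNReal.ofReal r ^ ((2 * α - n) * q) := by
        rw [setLIntegral_const, mul_assoc]
    _ ≤ c * ∫⁻ x in ball z r, ENNReal.ofReal (dist x z) ^ ((2 * α - n) * q) := by
        refine mul_le_mul_right (setLIntegral_mono' measurableSet_ball fun x hx => ?_) c
        exact ENNReal.rpow_le_rpow_of_nonpos ht (ENNReal.ofReal_le_ofReal (mem_ball.1 hx).le)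
    _ = ∫⁻ x in B, ENNReal.ofReal (dist x z) ^ ((2 * α - n) * q)
          ∂(c • volume.restrict (ball z r)) := by
        rw [Measure.restrict_smul, lintegral_smul_measure, smul_eq_mul,
          Measure.restrict_restrict' measurableSet_ball, inter_eq_right.2 hB]
    _ ≤ ∫⁻ x in B, ENNReal.ofReal (dist x z) ^ ((2 * α - n) * q) ∂σ :=
        lintegral_mono' (Measure.restrict_mono le_rfl hσ) le_rfl
    _ = ((∫⁻ x in B, ENNReal.ofReal (dist x z) ^ ((2 * α - n) * q) ∂σ) ^ (1 / q)) ^ q := by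
        rw [one_div, ENNReal.rpow_inv_rpow hq0.ne']
    _ ≤ kappaRiesz n α q σ B ^ q :=
        ENNReal.rpow_le_rpow (lintegral_dist_rpow_le_kappaRiesz σ B z) hq0.le

theorem exists_isFiniteMeasure_le_kappaRiesz_rpow (hn : 0 < n) (hq0 : 0 < q) (hq1 : q ≤ 1)
    (hα0 : 0 < α) (hα : 2 * α < n) (T : ℕ → ℝ) (hT : ∀ k, 1 ≤ T k) :
    ∃ σ : Measure (EuclideanSpace ℝ (Fin n)), IsFiniteMeasure σ ∧
      (∀ R, kappaRiesz n α q σ (ball 0 R) ≠ ∞) ∧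
      ∀ (k : ℕ) (R : ℝ), (k : ℝ) + 1 ≤ R →
        ENNReal.ofReal (T k) ≤ kappaRiesz n α q σ (ball 0 R) ^ q := by
  have : Nonempty (Fin n) := ⟨⟨0, hn⟩⟩
  set μ : Measure (EuclideanSpace ℝ (Fin n)) := volume
  set t := (2 * α - n) * q
  have ht : t < 0 := mul_neg_of_neg_of_pos (by linarith) hq0
  set e : EuclideanSpace ℝ (Fin n) := EuclideanSpace.single ⟨0, hn⟩ 1
  have he : ‖e‖ = 1 := by simp [e]
  have hT2 : ∀ k, 1 ≤ 2 ^ k * T k := fun k =>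
    one_le_mul_of_one_le_of_one_le (one_le_pow₀ one_le_two) (hT k)
  set ρ : ℕ → ℝ := fun k => (2 ^ k * T k) ^ t⁻¹
  have hρ0 : ∀ k, 0 < ρ k := fun k => Real.rpow_pos_of_pos (by linarith [hT2 k]) _
  have hρ1 : ∀ k, ρ k ≤ 1 := fun k =>
    Real.rpow_le_one_of_one_le_of_nonpos (hT2 k) (inv_nonpos.2 ht.le)
  have hρt : ∀ k, ENNReal.ofReal (ρ k) ^ t = 2 ^ k * ENNReal.ofReal (T k) := fun k => by
    rw [ENNReal.ofReal_rpow_of_pos (hρ0 k), ← Real.rpow_mul (by linarith [hT2 k]),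
      inv_mul_cancel₀ ht.ne, Real.rpow_one, ENNReal.ofReal_mul (by positivity),
      ENNReal.ofReal_pow zero_le_two, ENNReal.ofReal_ofNat]
  set σ := μ.withDensity (bumpDensity e ρ (bumpHeight ρ μ))
  have hσ : IsFiniteMeasure σ := isFiniteMeasure_withDensity_bumpDensity_bumpHeight e μ hρ0
  refine ⟨σ, hσ, fun R => ?_, fun k R hkR => ?_⟩
  · exact kappaRiesz_ne_top_of_restrict_le_smul_volume hn hq0 hq1 hα0 hα.le σ
      measure_ball_lt_top.ne (ENNReal.sum_ne_top.2 fun k _ => bumpHeight_ne_top μ hρ0 k)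
      (restrict_ball_withDensity_bumpDensity_le _ he hρ1 μ R)
  · have hsub : ball ((k : ℝ) • e) (ρ k) ⊆ ball 0 R := by
      refine ball_subset_ball' ?_
      simp only [dist_zero_right, norm_smul, he, Real.norm_natCast, mul_one]
      linarith [hρ1 k]
    calc ENNReal.ofReal (T k)
        = bumpHeight ρ μ k * μ (ball ((k : ℝ) • e) (ρ k)) * ENNReal.ofReal (ρ k) ^ t := by
          rw [bumpHeight_mul_measure_ball μ hρ0, hρt, ← ENNReal.inv_pow,
            ENNReal.inv_mul_cancel_left (by simp) (by simp)]
      _ = bumpHeight ρ μ k * ENNReal.ofReal (ρ k) ^ t * μ (ball ((k : ℝ) • e) (ρ k)) :=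
          mul_right_comm _ _ _
      _ ≤ kappaRiesz n α q σ (ball 0 R) ^ q := le_kappaRiesz_rpow_of_smul_restrict_le hq0 hα.le
          (smul_restrict_ball_le_withDensity_bumpDensity e ρ _ μ k) hsub

end Riesz

theorem div_ofReal_rpow_div_ofReal {R : ℝ} (hR : 0 < R) (c : ℝ) (x : ℝ≥0∞) :
    x / ENNReal.ofReal (R ^ c) / ENNReal.ofReal R = x * ENNReal.ofReal (R ^ (-(c + 1))) := by
  rw [div_eq_mul_inv, div_eq_mul_inv, mul_assoc, ← ENNReal.ofReal_inv_of_pos (by positivity),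
    ← ENNReal.ofReal_inv_of_pos hR, ← ENNReal.ofReal_mul (by positivity), ← Real.rpow_neg hR.le,
    ← Real.rpow_neg_one, ← Real.rpow_add hR]
  ring_nf

theorem setLIntegral_Ioi_one_div_rpow_div_ne_top {g : ℝ → ℝ≥0∞} {M : ℝ≥0∞} (hM : M ≠ ∞)
    (hg : ∀ R, g R ≤ M) {c : ℝ} (hc : 0 < c) :
    ∫⁻ R in Ioi (1 : ℝ), g R / ENNReal.ofReal (R ^ c) / ENNReal.ofReal R ≠ ∞ := by
  refine ne_top_of_le_ne_top ?_ (setLIntegral_mono' measurableSet_Ioi fun R (hR : 1 < R) =>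
    (div_ofReal_rpow_div_ofReal (by linarith) c (g R)).trans_le (mul_le_mul_left (hg R) _))
  rw [lintegral_const_mul' _ _ hM]
  exact mul_ne_top hM (integrableOn_Ioi_rpow_of_lt (by linarith) one_pos).setLIntegral_lt_top.ne

theorem setLIntegral_Ioi_one_div_rpow_div_eq_top {f : ℝ → ℝ≥0∞} {c : ℝ}
    (hf : ∀ R, 1 < R → ENNReal.ofReal (R ^ (c + 1)) ≤ f R) :
    ∫⁻ R in Ioi (1 : ℝ), f R / ENNReal.ofReal (R ^ c) / ENNReal.ofReal R = ∞ := by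
  have hge : ∀ R ∈ Ioi (1 : ℝ), 1 ≤ f R / ENNReal.ofReal (R ^ c) / ENNReal.ofReal R := by
    intro R (hR : 1 < R)
    have hR0 : 0 < R := by linarith
    calc (1 : ℝ≥0∞) = ENNReal.ofReal (R ^ (c + 1)) * ENNReal.ofReal (R ^ (-(c + 1))) := by
          rw [← ENNReal.ofReal_mul (by positivity), ← Real.rpow_add hR0, add_neg_cancel,
            Real.rpow_zero, ENNReal.ofReal_one]
      _ ≤ f R * ENNReal.ofReal (R ^ (-(c + 1))) := mul_le_mul_left (hf R hR) _
      _ = _ := (div_ofReal_rpow_div_ofReal hR0 c (f R)).symm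
  refine top_unique ?_
  calc ∞ = ∫⁻ _ in Ioi (1 : ℝ), 1 := by rw [setLIntegral_one, Real.volume_Ioi]
    _ ≤ _ := setLIntegral_mono' measurableSet_Ioi hge

theorem counterexample_measure_exists (n : ℕ) (q α : ℝ) (hn : 3 ≤ n)
    (hq0 : 0 < q) (hq1 : q < 1) (hα0 : 0 < α) (hα : 2 * α < n) :
    ∃ σ : Measure (EuclideanSpace ℝ (Fin n)), IsLocallyFiniteMeasure σ ∧
      (∫⁻ R in Set.Ioi (1 : ℝ),
          σ (Metric.ball (0 : EuclideanSpace ℝ (Fin n)) R)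
            / ENNReal.ofReal (R ^ ((n : ℝ) - 2 * α)) / ENNReal.ofReal R ≠ ⊤) ∧
      (∀ R : ℝ, 0 < R →
        kappaRiesz n α q σ (Metric.ball (0 : EuclideanSpace ℝ (Fin n)) R) ≠ ⊤) ∧
      (∫⁻ R in Set.Ioi (1 : ℝ),
          kappaRiesz n α q σ (Metric.ball (0 : EuclideanSpace ℝ (Fin n)) R) ^ (q / (1 - q))
            / ENNReal.ofReal (R ^ ((n : ℝ) - 2 * α)) / ENNReal.ofReal R = ⊤) := by
  have hc : 0 < (n : ℝ) - 2 * α := by linarith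
  obtain ⟨σ, hσ, hκ_ne_top, hκ_ge⟩ := exists_isFiniteMeasure_le_kappaRiesz_rpow (by omega) hq0
    hq1.le hα0 hα (fun k => ((k : ℝ) + 2) ^ ((n : ℝ) - 2 * α + 1))
    (fun k => Real.one_le_rpow (by linarith) (by linarith))
  refine ⟨σ, inferInstance, setLIntegral_Ioi_one_div_rpow_div_ne_top (measure_ne_top σ univ)
    (fun R => measure_mono (subset_univ _)) hc, fun R _ => hκ_ne_top R,
    setLIntegral_Ioi_one_div_rpow_div_eq_top fun R hR => ?_⟩
  set k := ⌊R - 1⌋₊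
  have hk1 : (k : ℝ) + 1 ≤ R := by linarith [Nat.floor_le (by linarith : 0 ≤ R - 1)]
  have hk2 : R ≤ (k : ℝ) + 2 := by linarith [Nat.lt_floor_add_one (R - 1)]
  calc ENNReal.ofReal (R ^ ((n : ℝ) - 2 * α + 1))
      ≤ ENNReal.ofReal (((k : ℝ) + 2) ^ ((n : ℝ) - 2 * α + 1)) :=
        ENNReal.ofReal_le_ofReal (Real.rpow_le_rpow (by linarith) hk2 (by linarith))
    _ ≤ ENNReal.ofReal (((k : ℝ) + 2) ^ ((n : ℝ) - 2 * α + 1)) ^ (1 / (1 - q)) :=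
        ENNReal.le_rpow_self_of_one_le (ENNReal.one_le_ofReal.2 (Real.one_le_rpow (by linarith)
          (by linarith))) (one_le_one_div (by linarith) (by linarith))
    _ ≤ (kappaRiesz n α q σ (ball 0 R) ^ q) ^ (1 / (1 - q)) :=
        ENNReal.rpow_le_rpow (hκ_ge k R hk1) (by simp only [one_div, inv_nonneg]; linarith)
    _ = kappaRiesz n α q σ (ball 0 R) ^ (q / (1 - q)) := by rw [← ENNReal.rpow_mul, mul_one_div]
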